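/- arXiv:1906.01439 — 4 statements merged into one kernel-verified Lean document; each statement's English description precedes it below -/
import Mathlib

section
/- Let ω ∈ ℝ³ satisfy the Diophantine condition |⟨k,ω⟩| ≥ γ/|k|² for all nonzero k ∈ ℤ³, with γ > 0 and ω₁ = 1. Let T ∈ SL(3,ℤ) have ω as eigenvector with real eigenvalue λ > 1 and two complex conjugate eigenvalues of modulus < 1, and let κ = |C|·|C⁻¹| be the condition number of the eigenvector matrix C (with columns ω, v₂, v₃, where v₂ ± iv₃ are the complex eigenvectors). Then λ - 1 ≥ γ/(4κ²λ²); in particular λ > λ₀, where λ₀ > 1 is the unique real root of x³ - x² - γ/(4κ²) = 0. -/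
lemma euc_apply (A : Matrix (Fin 3) (Fin 3) ℝ) (y : Fin 3 → ℝ) :
    Matrix.toEuclideanCLM (𝕜 := ℝ) A ((WithLp.equiv 2 _).symm y) =
      (WithLp.equiv 2 _).symm (A.mulVec y) := by
  simp [Matrix.toLin'_apply]

lemma euc_norm (y : Fin 3 → ℝ) :
    ‖((WithLp.equiv 2 (Fin 3 → ℝ)).symm y : EuclideanSpace ℝ (Fin 3))‖
      = Real.sqrt (∑ i, (y i) ^ 2) := by
  rw [EuclideanSpace.norm_eq]
  congr 1
  refine Finset.sum_congr rfl fun i _ => ?_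
  simp [sq_abs]

lemma opnorm_le (A : Matrix (Fin 3) (Fin 3) ℝ) (c : ℝ) (hc : 0 ≤ c)
    (h : ∀ y : Fin 3 → ℝ, ∑ i, (A.mulVec y i) ^ 2 ≤ c ^ 2 * ∑ i, (y i) ^ 2) :
    ‖Matrix.toEuclideanCLM (𝕜 := ℝ) A‖ ≤ c := by
  refine ContinuousLinearMap.opNorm_le_bound _ hc fun x => ?_
  have hx : x = (WithLp.equiv 2 (Fin 3 → ℝ)).symm (WithLp.equiv 2 _ x) := rfl
  rw [hx, euc_apply, euc_norm, euc_norm]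
  rw [← Real.sqrt_sq hc, ← Real.sqrt_mul (sq_nonneg c)]
  exact Real.sqrt_le_sqrt (h _)

lemma norm_le_opnorm (A : Matrix (Fin 3) (Fin 3) ℝ) (y : Fin 3 → ℝ) :
    Real.sqrt (∑ i, (A.mulVec y i) ^ 2)
      ≤ ‖Matrix.toEuclideanCLM (𝕜 := ℝ) A‖ * Real.sqrt (∑ i, (y i) ^ 2) := by
  have := (Matrix.toEuclideanCLM (𝕜 := ℝ) A).le_opNorm ((WithLp.equiv 2 (Fin 3 → ℝ)).symm y)
  rwa [euc_apply, euc_norm, euc_norm] at this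

lemma coord_le_norm (y : Fin 3 → ℝ) (i : Fin 3) : y i ≤ Real.sqrt (∑ j, (y j) ^ 2) := by
  have h1 : (y i) ^ 2 ≤ ∑ j, (y j) ^ 2 :=
    Finset.single_le_sum (f := fun j => (y j) ^ 2) (fun j _ => sq_nonneg _) (Finset.mem_univ i)
  calc y i ≤ |y i| := le_abs_self _
    _ = Real.sqrt ((y i) ^ 2) := (Real.sqrt_sq_eq_abs _).symm
    _ ≤ _ := Real.sqrt_le_sqrt h1

lemma tri_ineq (a b : Fin 3 → ℝ) :
    Real.sqrt (∑ i, (a i - b i) ^ 2)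
      ≤ Real.sqrt (∑ i, (a i) ^ 2) + Real.sqrt (∑ i, (b i) ^ 2) := by
  have hsub : (WithLp.equiv 2 (Fin 3 → ℝ)).symm a - (WithLp.equiv 2 (Fin 3 → ℝ)).symm b
      = (WithLp.equiv 2 (Fin 3 → ℝ)).symm (a - b) := rfl
  have := norm_sub_le ((WithLp.equiv 2 (Fin 3 → ℝ)).symm a) ((WithLp.equiv 2 (Fin 3 → ℝ)).symm b)
  rw [euc_norm, euc_norm, hsub, euc_norm] at this
  simpa [Pi.sub_apply] using this

set_option maxHeartbeats 1000000 in
/-- Lower bound for the leading eigenvalue of a Koch matrix: if `ω` (with `ω₁ = 1`)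
satisfies the Diophantine condition `|⟨k,ω⟩| ≥ γ/|k|²`, `T ∈ SL(3,ℤ)` has `ω` as
eigenvector with eigenvalue `λ > 1` and two complex conjugate eigenvalues
`μ₂ ± iμ₃` of modulus `< 1` (with real/imaginary eigenvector parts `v₂, v₃`),
and `κ = ‖C‖·‖C⁻¹‖` is the condition number of the eigenvector matrix `C`, then
`λ - 1 ≥ γ/(4κ²λ²)`; in particular `λ > λ₀` for the real root `λ₀ > 1` of
`x³ - x² - γ/(4κ²) = 0`. -/
theorem stmt8 (γ lam : ℝ) (hγ : 0 < γ)
    (ω v₂ v₃ : Fin 3 → ℝ) (hω1 : ω 0 = 1)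
    (hdio : ∀ k : Fin 3 → ℤ, k ≠ 0 →
      γ / (∑ i, (k i : ℝ) ^ 2) ≤ |∑ i, (k i : ℝ) * ω i|)
    (T : Matrix (Fin 3) (Fin 3) ℤ) (hdet : T.det = 1)
    (μ₂ μ₃ : ℝ) (hμ : μ₂ ^ 2 + μ₃ ^ 2 < 1)
    (hlam : 1 < lam)
    (hTω : (T.map (Int.cast : ℤ → ℝ)).mulVec ω = lam • ω)
    (hTv₂ : (T.map (Int.cast : ℤ → ℝ)).mulVec v₂ = μ₂ • v₂ - μ₃ • v₃)
    (hTv₃ : (T.map (Int.cast : ℤ → ℝ)).mulVec v₃ = μ₃ • v₂ + μ₂ • v₃)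
    (C : Matrix (Fin 3) (Fin 3) ℝ)
    (hC : C = Matrix.of fun i j => ![ω, v₂, v₃] j i)
    (hCdet : IsUnit C.det)
    (κ : ℝ)
    (hκ : κ = ‖Matrix.toEuclideanCLM (𝕜 := ℝ) C‖
        * ‖Matrix.toEuclideanCLM (𝕜 := ℝ) C⁻¹‖) :
    γ / (4 * κ ^ 2 * lam ^ 2) ≤ lam - 1 ∧
    ∀ lam₀ : ℝ, 1 < lam₀ → lam₀ ^ 3 - lam₀ ^ 2 - γ / (4 * κ ^ 2) = 0 →
      lam₀ < lam := by
  set A := T.map (Int.cast : ℤ → ℝ) with hA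
  set D : Matrix (Fin 3) (Fin 3) ℝ := Matrix.of ![![lam,0,0],![0,μ₂,μ₃],![0,-μ₃,μ₂]] with hD
  have hCi : C * C⁻¹ = 1 := Matrix.mul_nonsing_inv C hCdet
  -- κ ≥ 1
  have hκ1 : 1 ≤ κ := by
    have h1 : Matrix.toEuclideanCLM (𝕜 := ℝ) (C * C⁻¹) = 1 := by rw [hCi, map_one]
    have h2 : ‖(1 : EuclideanSpace ℝ (Fin 3) →L[ℝ] EuclideanSpace ℝ (Fin 3))‖ = 1 :=
      norm_one
    calc (1:ℝ) = ‖Matrix.toEuclideanCLM (𝕜 := ℝ) (C * C⁻¹)‖ := by rw [h1, h2]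
      _ = ‖Matrix.toEuclideanCLM (𝕜 := ℝ) C * Matrix.toEuclideanCLM (𝕜 := ℝ) C⁻¹‖ := by
          rw [map_mul]
      _ ≤ κ := by rw [hκ]; exact norm_mul_le _ _
  have hlam0 : (0:ℝ) < lam := by linarith
  have hκ0 : (0:ℝ) < κ := by linarith
  -- A = C * D * C⁻¹
  have hAC : A * C = C * D := by
    ext i j
    have h1 := congrFun hTω i
    have h2 := congrFun hTv₂ i
    have h3 := congrFun hTv₃ i
    simp [Matrix.mulVec, dotProduct, Fin.sum_univ_three] at h1 h2 h3
    fin_cases j <;>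
      simp [Matrix.mul_apply, hC, hD, Fin.sum_univ_three, Matrix.vecHead, Matrix.vecTail] <;>
      linarith
  have hAD : A = C * D * C⁻¹ := by
    calc A = A * (C * C⁻¹) := by rw [hCi, mul_one]
      _ = (A * C) * C⁻¹ := by rw [mul_assoc]
      _ = C * D * C⁻¹ := by rw [hAC]
  -- ‖D‖ ≤ lam
  have hDnorm : ‖Matrix.toEuclideanCLM (𝕜 := ℝ) D‖ ≤ lam := by
    refine opnorm_le D lam hlam0.le fun y => ?_
    have hl2 : 1 ≤ lam ^ 2 := by nlinarith
    simp only [Matrix.mulVec, dotProduct, Fin.sum_univ_three, hD, Matrix.of_apply]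
    simp [Matrix.vecHead, Matrix.vecTail]
    nlinarith [sq_nonneg (y 1), sq_nonneg (y 2), sq_nonneg (y 0), sq_nonneg (μ₂ * y 1 + μ₃ * y 2),
      sq_nonneg (μ₂ * y 2 - μ₃ * y 1)]
  -- ‖A‖ ≤ κ * lam
  have hAnorm : ‖Matrix.toEuclideanCLM (𝕜 := ℝ) A‖ ≤ κ * lam := by
    rw [hAD, map_mul, map_mul]
    calc ‖Matrix.toEuclideanCLM (𝕜 := ℝ) C * Matrix.toEuclideanCLM (𝕜 := ℝ) D *
          Matrix.toEuclideanCLM (𝕜 := ℝ) C⁻¹‖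
        ≤ ‖Matrix.toEuclideanCLM (𝕜 := ℝ) C * Matrix.toEuclideanCLM (𝕜 := ℝ) D‖ *
          ‖Matrix.toEuclideanCLM (𝕜 := ℝ) C⁻¹‖ := norm_mul_le _ _
      _ ≤ (‖Matrix.toEuclideanCLM (𝕜 := ℝ) C‖ * ‖Matrix.toEuclideanCLM (𝕜 := ℝ) D‖) *
          ‖Matrix.toEuclideanCLM (𝕜 := ℝ) C⁻¹‖ := by
          gcongr; exact norm_mul_le _ _
      _ ≤ (‖Matrix.toEuclideanCLM (𝕜 := ℝ) C‖ * lam) *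
          ‖Matrix.toEuclideanCLM (𝕜 := ℝ) C⁻¹‖ := by gcongr
      _ = κ * lam := by rw [hκ]; ring
  -- the integer vector k
  set k : Fin 3 → ℤ := ![T 0 0 - 1, T 0 1, T 0 2] with hk
  have hTω0 := congrFun hTω 0
  simp [Matrix.mulVec, dotProduct, Fin.sum_univ_three, hA] at hTω0
  have hkω : ∑ i, (k i : ℝ) * ω i = lam - 1 := by
    simp only [hk, Fin.sum_univ_three, Matrix.cons_val_zero, Matrix.cons_val_one,
      Matrix.head_cons, Matrix.cons_val_two, Matrix.tail_cons]
    push_cast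
    rw [hω1] at hTω0 ⊢
    linarith
  have hk0 : k ≠ 0 := by
    intro h
    rw [h] at hkω
    simp at hkω
    linarith
  -- bound on ∑ k² : the row r
  set r : Fin 3 → ℝ := fun j => A 0 j with hr
  set nr : ℝ := Real.sqrt (∑ j, (r j) ^ 2) with hnr
  have hnr0 : 0 ≤ nr := Real.sqrt_nonneg _
  have hrmul : A.mulVec r 0 = ∑ j, (r j) ^ 2 := by
    simp [Matrix.mulVec, dotProduct, Fin.sum_univ_three, hr]
    ring
  have hrbound : nr ≤ ‖Matrix.toEuclideanCLM (𝕜 := ℝ) A‖ := by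
    have h1 : nr ^ 2 ≤ ‖Matrix.toEuclideanCLM (𝕜 := ℝ) A‖ * nr := by
      have h2 : ∑ j, (r j) ^ 2 ≤ Real.sqrt (∑ i, (A.mulVec r i) ^ 2) := by
        rw [← hrmul]; exact coord_le_norm (A.mulVec r) 0
      have h3 := norm_le_opnorm A r
      have h4 : nr ^ 2 = ∑ j, (r j) ^ 2 := Real.sq_sqrt (Finset.sum_nonneg fun i _ => sq_nonneg _)
      rw [h4]
      exact h2.trans h3
    rcases eq_or_lt_of_le hnr0 with h | h
    · rw [← h]; exact norm_nonneg _
    · nlinarith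
  -- ‖k‖ ≤ nr + 1
  set S : ℝ := ∑ i : Fin 3, ((k i : ℝ)) ^ 2 with hS
  have hS0 : 0 < S := by
    obtain ⟨i, hi⟩ := Function.ne_iff.mp hk0
    have h1 : (0:ℝ) < ((k i : ℝ)) ^ 2 := by
      have : (k i : ℝ) ≠ 0 := by exact_mod_cast hi
      positivity
    exact lt_of_lt_of_le h1 (Finset.single_le_sum (f := fun j => ((k j : ℝ)) ^ 2)
      (fun j _ => sq_nonneg _) (Finset.mem_univ i))
  have hsqrtS : Real.sqrt S ≤ nr + 1 := by
    have h1 : ∀ i, (k i : ℝ) = r i - (![1,0,0] : Fin 3 → ℝ) i := by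
      intro i
      fin_cases i <;>
        simp [hk, hr, hA, Matrix.map_apply] <;> push_cast <;> ring
    have h2 := tri_ineq r (![1,0,0] : Fin 3 → ℝ)
    have h3 : S = ∑ i : Fin 3, (r i - (![1,0,0] : Fin 3 → ℝ) i) ^ 2 := by
      rw [hS]; exact Finset.sum_congr rfl fun i _ => by rw [h1]
    have h4 : (∑ i : Fin 3, ((![1,0,0] : Fin 3 → ℝ) i) ^ 2 : ℝ) = 1 := by
      simp [Fin.sum_univ_three]
    rw [h3]
    calc Real.sqrt (∑ i : Fin 3, (r i - (![1,0,0] : Fin 3 → ℝ) i) ^ 2) ≤ _ := h2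
      _ = nr + 1 := by rw [← hnr, h4, Real.sqrt_one]
  -- conclude strict inequality
  have hdiok : γ / S ≤ lam - 1 := by
    have h := hdio k hk0
    rw [hkω, ← hS] at h
    rwa [abs_of_pos (by linarith : (0:ℝ) < lam - 1)] at h
  have hAop := hrbound.trans hAnorm
  clear_value S nr k r A D
  -- S < 4κ²λ²
  have hkl : 1 < κ * lam := by nlinarith
  have hSlt : S < 4 * κ ^ 2 * lam ^ 2 := by
    have h1 : Real.sqrt S ≤ κ * lam + 1 := by linarith [hsqrtS, hAop]
    have h2 : S = (Real.sqrt S) ^ 2 := (Real.sq_sqrt hS0.le).symm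
    nlinarith [Real.sqrt_nonneg S]
  have hstrict : γ / (4 * κ ^ 2 * lam ^ 2) < lam - 1 := by
    have h1 : γ / (4 * κ ^ 2 * lam ^ 2) < γ / S :=
      div_lt_div_of_pos_left hγ hS0 hSlt
    exact lt_of_lt_of_le h1 hdiok
  refine ⟨hstrict.le, fun lam₀ h1 h2 => ?_⟩
  have hcube : γ / (4 * κ ^ 2) < lam ^ 3 - lam ^ 2 := by
    have h3 : γ / (4 * κ ^ 2 * lam ^ 2) = (γ / (4 * κ ^ 2)) / lam ^ 2 := by
      field_simp
    rw [h3] at hstrict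
    have h4 : (0:ℝ) < lam ^ 2 := by positivity
    have h5 := (div_lt_iff₀ h4).mp hstrict
    nlinarith
  have h6 : lam₀ ^ 3 - lam₀ ^ 2 < lam ^ 3 - lam ^ 2 := by linarith
  by_contra h7
  push_neg at h7
  have key : 0 ≤ (lam₀ - lam) * (lam₀ ^ 2 + lam * lam₀ + lam ^ 2 - lam₀ - lam) :=
    mul_nonneg (by linarith) (by nlinarith)
  nlinarith [key]
end

section
/- Fix λ > 1, Z₁, Z₂ ∈ ℝ and Y₁, Y₂ > 0 with (Z₁,Y₁) ≠ (Z₂,Y₂). Set Z = Z₂ - Z₁, W = (Y₂/Y₁)^{1/3}, and define C(ζ; Zᵢ, Yᵢ) = Yᵢ^{1/3}·(2λ^{-(ζ-Zᵢ)/2} + λ^{ζ-Zᵢ})/3. If λ^Z < min(W, W⁻²) or λ^Z > max(W, W⁻²), then the equation C(ζ; Z₁,Y₁) = C(ζ; Z₂,Y₂) has exactly one real solution ζ*, given by λ^{3(ζ*-Z₁)/2} = 2λ^Z(Wλ^{Z/2} - 1)/(λ^Z - W). -/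
/-!
Writing `ξ = ζ - Z₁`, `a = λ^{ξ/2}` and `s = λ^{Z/2}`, the equation `C(ζ; Z₁, Y₁) = C(ζ; Z₂, Y₂)`
becomes, after cancelling `Y₁^{1/3}/3` and multiplying by `a s²`, the equation
`a³ (s² - W) = 2 s² (W s - 1)`, which is linear in `t = a³ = λ^{3ξ/2}`. The hypothesis on `λ^Z = s²`
says exactly that `s² - W` and `W s - 1` are nonzero of the same sign, so `t` is positive, and
`ξ ↦ λ^{3ξ/2}` is a bijection of `ℝ` onto `(0, ∞)`.
-/

open Real

/-- `C(ζ; Zᵢ, Yᵢ) = Yᵢ^{1/3} · coshProfile λ (ζ - Zᵢ) / 3`. -/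
noncomputable def coshProfile (lam ξ : ℝ) : ℝ := 2 * lam ^ (-ξ / 2) + lam ^ ξ

theorem rpow_eq_rpow_half_sq {lam : ℝ} (hlam : 0 ≤ lam) (x : ℝ) : lam ^ x = (lam ^ (x / 2)) ^ 2 := by
  rw [← rpow_mul_natCast hlam]; norm_num

theorem coshProfile_eq_mul_coshProfile_sub_iff {lam : ℝ} (hlam : 0 < lam) (ξ Z W : ℝ)
    (hden : lam ^ Z - W ≠ 0) :
    coshProfile lam ξ = W * coshProfile lam (ξ - Z) ↔
      lam ^ (3 * ξ / 2) = 2 * lam ^ Z * (W * lam ^ (Z / 2) - 1) / (lam ^ Z - W) := by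
  set a := lam ^ (ξ / 2)
  set s := lam ^ (Z / 2)
  have ha : a ≠ 0 := (rpow_pos_of_pos hlam _).ne'
  have hs : s ≠ 0 := (rpow_pos_of_pos hlam _).ne'
  have hcube : lam ^ (3 * ξ / 2) = a ^ 3 := by
    rw [← rpow_mul_natCast hlam.le]; ring_nf
  have hneg : lam ^ (-ξ / 2) = a⁻¹ := by rw [neg_div, rpow_neg hlam.le]
  have hneg_sub : lam ^ (-(ξ - Z) / 2) = s * a⁻¹ := by
    rw [show -(ξ - Z) / 2 = Z / 2 + -(ξ / 2) by ring, rpow_add hlam, rpow_neg hlam.le]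
  have hsub : lam ^ (ξ - Z) = a ^ 2 / s ^ 2 := by
    rw [rpow_sub hlam, rpow_eq_rpow_half_sq hlam.le ξ, rpow_eq_rpow_half_sq hlam.le Z]
  rw [rpow_eq_rpow_half_sq hlam.le Z] at hden ⊢
  rw [coshProfile, coshProfile, hcube, hneg, hneg_sub, hsub, rpow_eq_rpow_half_sq hlam.le ξ,
    eq_div_iff hden]
  field_simp
  constructor <;> intro h <;> linear_combination h

theorem mul_sub_one_div_sq_sub_pos {W s : ℝ} (hW : 0 < W) (hs : 0 < s)
    (h : s ^ 2 < min W (W⁻¹ ^ 2) ∨ max W (W⁻¹ ^ 2) < s ^ 2) :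
    0 < (W * s - 1) / (s ^ 2 - W) := by
  rcases h with h | h
  · rw [lt_min_iff] at h
    have hs' : s < W⁻¹ := (pow_lt_pow_iff_left₀ hs.le (by positivity) two_ne_zero).1 h.2
    have : W * s < 1 := calc
      W * s < W * W⁻¹ := by gcongr
      _ = 1 := mul_inv_cancel₀ hW.ne'
    exact div_pos_of_neg_of_neg (by linarith) (by linarith)
  · rw [max_lt_iff] at h
    have hs' : W⁻¹ < s := (pow_lt_pow_iff_left₀ (by positivity) hs.le two_ne_zero).1 h.2
    have : 1 < W * s := calc
      1 = W * W⁻¹ := (mul_inv_cancel₀ hW.ne').symm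
      _ < W * s := by gcongr
    exact div_pos (by linarith) (by linarith)

theorem stmt14_general (lam : ℝ) (hlam : 1 < lam)
    (Z₁ Z₂ Y₁ Y₂ : ℝ) (hY₁ : 0 < Y₁) (hY₂ : 0 < Y₂)
    (Z W : ℝ) (hZ : Z = Z₂ - Z₁) (hW : W = (Y₂ / Y₁) ^ ((1 : ℝ) / 3))
    (hcond : lam ^ Z < min W (W⁻¹ ^ 2) ∨ max W (W⁻¹ ^ 2) < lam ^ Z) :
    let Cf : ℝ → ℝ → ℝ → ℝ := fun Z' Y ζ =>
      Y ^ ((1 : ℝ) / 3) * (2 * lam ^ (-(ζ - Z') / 2) + lam ^ (ζ - Z')) / 3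
    (∃! ζ : ℝ, Cf Z₁ Y₁ ζ = Cf Z₂ Y₂ ζ) ∧
    ∀ ζ : ℝ, Cf Z₁ Y₁ ζ = Cf Z₂ Y₂ ζ →
      lam ^ (3 * (ζ - Z₁) / 2)
        = 2 * lam ^ Z * (W * lam ^ (Z / 2) - 1) / (lam ^ Z - W) := by
  intro Cf
  have hlam0 : 0 < lam := by linarith
  have hsq := rpow_eq_rpow_half_sq hlam0.le Z
  have hW0 : 0 < W := hW ▸ rpow_pos_of_pos (div_pos hY₂ hY₁) _
  set t := 2 * lam ^ Z * (W * lam ^ (Z / 2) - 1) / (lam ^ Z - W) with ht_def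
  have ht : 0 < t := by
    rw [ht_def, mul_div_assoc, hsq]
    exact mul_pos (by positivity)
      (mul_sub_one_div_sq_sub_pos hW0 (rpow_pos_of_pos hlam0 _) (hsq ▸ hcond))
  have hden : lam ^ Z - W ≠ 0 := fun h => by simp [ht_def, h] at ht
  have hY : Y₂ ^ ((1 : ℝ) / 3) = W * Y₁ ^ ((1 : ℝ) / 3) := by
    rw [hW, div_rpow hY₂.le hY₁.le, div_mul_cancel₀ _ (rpow_pos_of_pos hY₁ _).ne']
  have key : ∀ ζ, Cf Z₁ Y₁ ζ = Cf Z₂ Y₂ ζ ↔ lam ^ (3 * (ζ - Z₁) / 2) = t := fun ζ => by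
    rw [← coshProfile_eq_mul_coshProfile_sub_iff hlam0 _ _ _ hden,
      show ζ - Z₁ - Z = ζ - Z₂ by rw [hZ]; ring]
    change Y₁ ^ ((1 : ℝ) / 3) * coshProfile lam (ζ - Z₁) / 3
      = Y₂ ^ ((1 : ℝ) / 3) * coshProfile lam (ζ - Z₂) / 3 ↔ _
    rw [hY, div_left_inj' three_ne_zero, mul_comm W, mul_assoc,
      mul_right_inj' (rpow_pos_of_pos hY₁ _).ne']
  have hlogb : ∀ x, lam ^ x = t ↔ logb lam t = x := fun x =>
    (logb_eq_iff_rpow_eq hlam0 hlam.ne' ht).symm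
  refine ⟨⟨Z₁ + 2 * logb lam t / 3, (key _).2 ?_, fun ζ hζ => ?_⟩, fun ζ => (key ζ).1⟩
  · rw [hlogb]; ring
  · have := (hlogb _).1 ((key ζ).1 hζ)
    linarith

/-- Intersection of two 'hyperbolic cosine-like' functions: for `λ > 1`, `Y₁,Y₂ > 0`,
`(Z₁,Y₁) ≠ (Z₂,Y₂)`, with `Z = Z₂ - Z₁` and `W = (Y₂/Y₁)^{1/3}`, if
`λ^Z < min(W, W⁻²)` or `λ^Z > max(W, W⁻²)`, then the equation
`C(ζ;Z₁,Y₁) = C(ζ;Z₂,Y₂)` has exactly one real solution `ζ*`, given by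
`λ^{3(ζ*-Z₁)/2} = 2λ^Z(Wλ^{Z/2} - 1)/(λ^Z - W)`. -/
theorem stmt14 (lam : ℝ) (hlam : 1 < lam)
    (Z₁ Z₂ Y₁ Y₂ : ℝ) (hY₁ : 0 < Y₁) (hY₂ : 0 < Y₂)
    (hne : (Z₁, Y₁) ≠ (Z₂, Y₂))
    (Z W : ℝ) (hZ : Z = Z₂ - Z₁) (hW : W = (Y₂ / Y₁) ^ ((1 : ℝ) / 3))
    (hcond : lam ^ Z < min W (W⁻¹ ^ 2) ∨ max W (W⁻¹ ^ 2) < lam ^ Z) :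
    let Cf : ℝ → ℝ → ℝ → ℝ := fun Z' Y ζ =>
      Y ^ ((1 : ℝ) / 3) * (2 * lam ^ (-(ζ - Z') / 2) + lam ^ (ζ - Z')) / 3
    (∃! ζ : ℝ, Cf Z₁ Y₁ ζ = Cf Z₂ Y₂ ζ) ∧
    ∀ ζ : ℝ, Cf Z₁ Y₁ ζ = Cf Z₂ Y₂ ζ →
      lam ^ (3 * (ζ - Z₁) / 2)
        = 2 * lam ^ Z * (W * lam ^ (Z / 2) - 1) / (lam ^ Z - W) :=
  stmt14_general lam hlam Z₁ Z₂ Y₁ Y₂ hY₁ hY₂ Z W hZ hW hcond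
end

section
/- Fix λ > 1 and define C₀(ζ) = (2λ^{-ζ/2} + λ^ζ)/3. The graphs of C₀(ζ) and C₀(ζ - 1) intersect at the unique point ζ = ξ₀ determined by λ^{3ξ₀/2} = 2λ/(√λ + 1), and moreover 1/3 < ξ₀ < 1/2. -/
/-!
With `t = λ^{ζ/2}` and `s = √λ` one has `C₀(ζ) = (2/t + t²)/3` and `C₀(ζ - 1) = (2s/t + t²/s²)/3`,
so the graphs meet iff `t³(s² - 1) = 2s²(s - 1)`, i.e. iff `λ^{3ζ/2} = 2λ/(√λ + 1)`. Since
`ζ ↦ λ^{3ζ/2}` is strictly increasing, this has the single solution `ξ₀ = (2/3)·log_λ(2λ/(√λ + 1))`,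
and `1/3 < ξ₀ < 1/2` becomes `λ^{1/2} < 2λ/(√λ + 1) < λ^{3/4}`.
-/

open Real

noncomputable def C0 (lam ζ : ℝ) : ℝ := (2 * lam ^ (-ζ / 2) + lam ^ ζ) / 3

theorem C0_eq_C0_sub_one_iff {lam : ℝ} (hlam : 0 < lam) (hlam_ne : lam ≠ 1) (ζ : ℝ) :
    C0 lam ζ = C0 lam (ζ - 1) ↔ lam ^ (3 * ζ / 2) = 2 * lam / (√lam + 1) := by
  set s := √lam with hs_def
  set t := lam ^ (ζ / 2)
  have hs : 0 < s := sqrt_pos.2 hlam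
  have hss : s ^ 2 = lam := sq_sqrt hlam.le
  have hs_ne : s - 1 ≠ 0 := by
    refine sub_ne_zero.2 fun h => hlam_ne ?_
    rw [← hss, h, one_pow]
  have ht : 0 < t := rpow_pos_of_pos hlam _
  have rpow_nat_mul (n : ℕ) : lam ^ (n * (ζ / 2)) = t ^ n := by
    rw [mul_comm, rpow_mul hlam.le, rpow_natCast]
  have h_neg : lam ^ (-ζ / 2) = t⁻¹ := by rw [neg_div, rpow_neg hlam.le]
  have h_sq : lam ^ ζ = t ^ 2 := by rw [← rpow_nat_mul]; push_cast; ring_nf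
  have h_cube : lam ^ (3 * ζ / 2) = t ^ 3 := by rw [← rpow_nat_mul]; push_cast; ring_nf
  have h_neg_sub : lam ^ (-(ζ - 1) / 2) = s * t⁻¹ := by
    rw [← h_neg, hs_def, sqrt_eq_rpow, ← rpow_add hlam]; ring_nf
  have h_sub : lam ^ (ζ - 1) = t ^ 2 / lam := by rw [rpow_sub_one hlam.ne', h_sq]
  rw [C0, C0, h_neg, h_sq, h_cube, h_neg_sub, h_sub, ← hss,
    eq_div_iff (by positivity : s + 1 ≠ 0)]
  constructor
  · intro h
    field_simp at h
    apply mul_left_cancel₀ hs_ne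
    linear_combination h
  · intro h
    field_simp
    linear_combination (s - 1) * h

theorem sqrt_lt_two_mul_div_sqrt_add_one {lam : ℝ} (hlam : 1 < lam) :
    √lam < 2 * lam / (√lam + 1) := by
  have hs : 1 < √lam := by rwa [lt_sqrt zero_le_one, one_pow]
  rw [lt_div_iff₀ (by positivity)]
  nlinarith [sq_sqrt (zero_le_one.trans hlam.le)]

theorem two_mul_div_sqrt_add_one_lt_rpow {lam : ℝ} (hlam : 0 < lam) (hlam_ne : lam ≠ 1) :
    2 * lam / (√lam + 1) < lam ^ (3 / 4 : ℝ) := by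
  set u := lam ^ (1 / 4 : ℝ)
  have hu : 0 < u := rpow_pos_of_pos hlam _
  have rpow_div_four (n : ℕ) : lam ^ ((n : ℝ) / 4) = u ^ n := by
    rw [div_eq_mul_one_div, mul_comm, rpow_mul hlam.le, rpow_natCast]
  have h_lam : lam = u ^ 4 := by simpa using rpow_div_four 4
  have hu_ne : u ≠ 1 := fun h => hlam_ne <| by rw [h_lam, h, one_pow]
  have h_sqrt : √lam = u ^ 2 := by rw [sqrt_eq_rpow, ← rpow_div_four]; norm_num
  have h_three : lam ^ (3 / 4 : ℝ) = u ^ 3 := by exact_mod_cast rpow_div_four 3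
  -- `2u⁴ < u³(u² + 1)` is `0 < u³(u - 1)²`
  rw [h_three, h_sqrt, div_lt_iff₀ (by positivity), h_lam]
  nlinarith [pow_pos hu 3, sq_pos_of_ne_zero (sub_ne_zero.2 hu_ne)]

/-- For `λ > 1` and `C₀(ζ) = (2λ^{-ζ/2} + λ^ζ)/3`, the graphs of `C₀(ζ)` and
`C₀(ζ-1)` intersect at a unique point `ζ = ξ₀`, determined by
`λ^{3ξ₀/2} = 2λ/(√λ + 1)`, and `1/3 < ξ₀ < 1/2`. -/
theorem stmt15 (lam : ℝ) (hlam : 1 < lam) :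
    let C₀ : ℝ → ℝ := fun ζ => (2 * lam ^ (-ζ / 2) + lam ^ ζ) / 3
    let ξ₀ : ℝ := 2 / (3 * Real.log lam) * Real.log (2 * lam / (Real.sqrt lam + 1))
    lam ^ (3 * ξ₀ / 2) = 2 * lam / (Real.sqrt lam + 1) ∧
    C₀ ξ₀ = C₀ (ξ₀ - 1) ∧
    (∀ ζ : ℝ, C₀ ζ = C₀ (ζ - 1) → ζ = ξ₀) ∧
    1 / 3 < ξ₀ ∧ ξ₀ < 1 / 2 := by
  intro C₀ ξ₀
  have hpos : 0 < lam := zero_lt_one.trans hlam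
  have hne : lam ≠ 1 := hlam.ne'
  set A := 2 * lam / (√lam + 1)
  have hA : 0 < A := by positivity
  have hξ₀ : ξ₀ = 2 / 3 * logb lam A := by simp only [ξ₀, logb]; ring
  have hpow : lam ^ (3 * ξ₀ / 2) = A :=
    (logb_eq_iff_rpow_eq hpos hne hA).1 (by rw [hξ₀]; ring)
  refine ⟨hpow, (C0_eq_C0_sub_one_iff hpos hne ξ₀).2 hpow, fun ζ hζ => ?_, ?_, ?_⟩
  · have := (logb_eq_iff_rpow_eq hpos hne hA).2 ((C0_eq_C0_sub_one_iff hpos hne ζ).1 hζ)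
    linarith
  · have := (lt_logb_iff_rpow_lt (x := 1 / 2) hlam hA).2
      (by rw [← sqrt_eq_rpow]; exact sqrt_lt_two_mul_div_sqrt_add_one hlam)
    linarith
  · have := (logb_lt_iff_lt_rpow hlam hA).2 (two_mul_div_sqrt_add_one_lt_rpow hpos hne)
    linarith
end

section
/- Let Ω be the real root of x³ = 1 - x and λ = 1/Ω ≈ 1.465571. Let ξ₀ be defined by λ^{3ξ₀/2} = 2λ/(√λ + 1). Then ξ₀ ∈ (0.49, 0.493), and the quantity J₁⁽⁰⁾ = (1/3)[2((√λ+1)/(2λ))^{1/3} + (2λ/(√λ+1))^{2/3}] satisfies 1 < J₁⁽⁰⁾ < 1.01. -/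
set_option maxHeartbeats 1000000 in
/-- For the cubic golden number `Ω` and `λ = 1/Ω ≈ 1.465571`: the corner location
`ξ₀` (defined by `λ^{3ξ₀/2} = 2λ/(√λ+1)`) satisfies `ξ₀ ∈ (0.49, 0.493)`, and
`J₁⁽⁰⁾ = (1/3)[2((√λ+1)/(2λ))^{1/3} + (2λ/(√λ+1))^{2/3}]` satisfies `1 < J₁⁽⁰⁾ < 1.01`. -/
theorem stmt16 (Ω : ℝ) (hΩ : Ω ^ 3 = 1 - Ω) :
    let lam : ℝ := 1 / Ω
    let ξ₀ : ℝ := 2 / (3 * Real.log lam) * Real.log (2 * lam / (Real.sqrt lam + 1))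
    let J : ℝ := (1 / 3) * (2 * ((Real.sqrt lam + 1) / (2 * lam)) ^ ((1 : ℝ) / 3)
        + (2 * lam / (Real.sqrt lam + 1)) ^ ((2 : ℝ) / 3))
    (0.49 < ξ₀ ∧ ξ₀ < 0.493) ∧ (1 < J ∧ J < 1.01) := by
  intro lam ξ₀ J
  -- bounds on Ω
  have hΩ1 : (0.6823 : ℝ) < Ω := by
    nlinarith [sq_nonneg (Ω + 0.35), sq_nonneg Ω, sq_nonneg (Ω - 0.6823)]
  have hΩ2 : Ω < 0.6824 := by
    nlinarith [sq_nonneg (Ω + 0.35), sq_nonneg Ω, sq_nonneg (Ω - 0.6824)]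
  have hΩpos : (0 : ℝ) < Ω := by linarith
  have hlamdef : lam = 1 / Ω := rfl
  have hlam1 : (1.4654 : ℝ) < lam := by
    rw [hlamdef, lt_div_iff₀ hΩpos]; nlinarith
  have hlam2 : lam < 1.4657 := by
    rw [hlamdef, div_lt_iff₀ hΩpos]; nlinarith
  have hlampos : (0 : ℝ) < lam := by linarith
  set s : ℝ := Real.sqrt lam with hs
  have hs1 : (1.2105 : ℝ) < s := by
    rw [hs, show (1.2105 : ℝ) = Real.sqrt (1.2105 ^ 2) by
      rw [Real.sqrt_sq]; norm_num]
    apply Real.sqrt_lt_sqrt (by positivity)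
    nlinarith
  have hs2 : s < 1.2107 := by
    rw [hs, show (1.2107 : ℝ) = Real.sqrt (1.2107 ^ 2) by
      rw [Real.sqrt_sq]; norm_num]
    apply Real.sqrt_lt_sqrt (by positivity)
    nlinarith
  have hspos : (0 : ℝ) < s := by linarith
  set t : ℝ := 2 * lam / (s + 1) with ht
  have hsp1 : (0 : ℝ) < s + 1 := by linarith
  have ht1 : (1.3256 : ℝ) < t := by
    rw [ht, lt_div_iff₀ hsp1]; nlinarith
  have ht2 : t < 1.3263 := by
    rw [ht, div_lt_iff₀ hsp1]; nlinarith
  have htpos : (0 : ℝ) < t := by linarith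
  have hL : (0 : ℝ) < Real.log lam := Real.log_pos (by linarith)
  have hM : (0 : ℝ) < Real.log t := Real.log_pos (by linarith)
  constructor
  · -- ξ₀ bounds
    have hξdef : ξ₀ = 2 / (3 * Real.log lam) * Real.log t := rfl
    have hup : t ^ (23 : ℕ) < lam ^ (17 : ℕ) := by
      calc t ^ (23 : ℕ) ≤ (1.3263 : ℝ) ^ (23 : ℕ) :=
            pow_le_pow_left₀ htpos.le ht2.le _
          _ < (1.4654 : ℝ) ^ (17 : ℕ) := by norm_num
          _ ≤ lam ^ (17 : ℕ) := pow_le_pow_left₀ (by norm_num) hlam1.le _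
    have hlo : lam ^ (14 : ℕ) < t ^ (19 : ℕ) := by
      calc lam ^ (14 : ℕ) ≤ (1.4657 : ℝ) ^ (14 : ℕ) :=
            pow_le_pow_left₀ hlampos.le hlam2.le _
          _ < (1.3256 : ℝ) ^ (19 : ℕ) := by norm_num
          _ ≤ t ^ (19 : ℕ) := pow_le_pow_left₀ (by norm_num) ht1.le _
    have hupl : 23 * Real.log t < 17 * Real.log lam := by
      have h := Real.log_lt_log (by positivity) hup
      rw [Real.log_pow, Real.log_pow] at h
      push_cast at h
      linarith
    have hlol : 14 * Real.log lam < 19 * Real.log t := by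
      have h := Real.log_lt_log (by positivity) hlo
      rw [Real.log_pow, Real.log_pow] at h
      push_cast at h
      linarith
    rw [hξdef]
    constructor
    · rw [div_mul_eq_mul_div, lt_div_iff₀ (by linarith)]
      nlinarith
    · rw [div_mul_eq_mul_div, div_lt_iff₀ (by linarith)]
      nlinarith
  · -- J bounds
    obtain ⟨a, ha⟩ : ∃ a : ℝ, a = t ^ ((1 : ℝ) / 3) := ⟨_, rfl⟩
    have hapos : (0 : ℝ) < a := ha ▸ Real.rpow_pos_of_pos htpos _
    have hcube : ∀ c : ℝ, 0 < c → (c ^ (3 : ℕ)) ^ ((1 : ℝ) / 3) = c := by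
      intro c hc
      rw [← Real.rpow_natCast c 3, ← Real.rpow_mul hc.le]
      norm_num
    have ha2 : a < 1.0988 := by
      rw [ha, show (1.0988 : ℝ) = ((1.0988 : ℝ) ^ (3 : ℕ)) ^ ((1 : ℝ) / 3) from
        (hcube _ (by norm_num)).symm]
      apply Real.rpow_lt_rpow htpos.le _ (by norm_num)
      nlinarith
    have ha1 : (1.0983 : ℝ) < a := by
      rw [ha, show (1.0983 : ℝ) = ((1.0983 : ℝ) ^ (3 : ℕ)) ^ ((1 : ℝ) / 3) from
        (hcube _ (by norm_num)).symm]
      apply Real.rpow_lt_rpow (by norm_num) _ (by norm_num)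
      nlinarith
    have hterm1 : ((s + 1) / (2 * lam)) ^ ((1 : ℝ) / 3) = a⁻¹ := by
      have : (s + 1) / (2 * lam) = t⁻¹ := by
        rw [ht]; field_simp
      rw [this, Real.inv_rpow htpos.le, ← ha]
    have hterm2 : t ^ ((2 : ℝ) / 3) = a ^ (2 : ℕ) := by
      rw [ha, ← Real.rpow_natCast (t ^ ((1 : ℝ) / 3)) 2, ← Real.rpow_mul htpos.le]
      norm_num
    have hJdef : J = (1 / 3) * (2 * ((s + 1) / (2 * lam)) ^ ((1 : ℝ) / 3)
        + t ^ ((2 : ℝ) / 3)) := rfl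
    rw [hJdef, hterm1, hterm2]
    have hainv1 : a⁻¹ < (1.0983 : ℝ)⁻¹ := by
      exact inv_strictAnti₀ (by norm_num) ha1
    have hainv2 : ((1.0988 : ℝ))⁻¹ < a⁻¹ := by
      exact inv_strictAnti₀ hapos ha2
    have h2 : 2 * a⁻¹ + a ^ 2 = (2 + a ^ 3) / a := by
      field_simp
    constructor
    · have key : 3 * a < 2 + a ^ 3 := by nlinarith [sq_nonneg (a - 1)]
      have hge : (3 : ℝ) < 2 * a⁻¹ + a ^ 2 := by
        rw [h2, lt_div_iff₀ hapos]; linarith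
      linarith
    · have key : 2 + a ^ 3 < 3.03 * a := by nlinarith
      have hle : 2 * a⁻¹ + a ^ 2 < 3.03 := by
        rw [h2, div_lt_iff₀ hapos]; linarith
      linarith
end
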